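/- Let f be a cusp form of weight k for SL₂(ℤ) with Fourier coefficients (a_n)_{n≥1}, and let s be a complex number such that the series ∑_{n=1}^∞ |a_n| n^{-Re(s)} converges. Then the Mellin integral ∫_0^∞ f(it) t^{s} dt/t converges and equals (2π)^{-s} Γ(s) ∑_{n=1}^∞ a_n n^{-s}. -/

import Mathlib

open MeasureTheory

/-- The function `t ↦ f(it)` on `(0,∞)` associated with a cusp form `f` (extended by `0`
to the rest of the real line). -/
noncomputable def cuspFormOnImaginaryAxis (k : ℤ) (f : CuspForm (MonoidHom.range (Matrix.SpecialLinearGroup.mapGL ℝ : Matrix.SpecialLinearGroup (Fin 2) ℤ →* Matrix.GeneralLinearGroup (Fin 2) ℝ)) k) (t : ℝ) : ℂ :=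
  if ht : 0 < t then f ⟨Complex.I * t, by simpa using ht⟩ else 0

/-! For `Re s > 0`, expand `f(it) = ∑ aₙ e^{-2πnt}` and integrate termwise against `t^{s-1}`:
the `n`-th term contributes `Γ(s) aₙ (2πn)^{-s}`, and the hypothesis on `s` makes the interchange
legitimate. The Mellin integral itself converges for every `s`, because `f(it)` decays rapidly as
`t → ∞` and, through `f(i/t) = (it)^k f(it)`, also as `t → 0`.

For `Re s ≤ 0` the hypothesis gives `∑ |aₙ| < ∞`, so `|f| ≤ ∑ |aₙ|` on `ℍ`. A bounded level-one
cusp form vanishes: for `k ≤ 0` every cusp form does, and for `k > 0` comparing `f` at `z` and at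
`γ z`, with `γ ∈ SL₂(ℤ)` of bottom row `(n, 1)`, gives `|f z| ≤ B (n Im z)^{-k}` for all `n`.
Hence `f = 0`, all `aₙ = 0` by uniqueness of `q`-expansions, and both sides vanish. -/

open Complex Filter Set
open UpperHalfPlane hiding I
open scoped Real MatrixGroups

lemma norm_le_tsum_norm_coeff_of_hasSum {a : ℕ → ℂ} {z : ℂ} {w : ℂ} (hz : 0 ≤ z.im)
    (hw : HasSum (fun n : ℕ => a n * exp (2 * π * I * n * z)) w)
    (hsum : Summable fun n => ‖a n‖) : ‖w‖ ≤ ∑' n, ‖a n‖ := by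
  refine hw.norm_le_of_bounded hsum.hasSum fun n ↦ ?_
  rw [norm_mul, norm_exp]
  refine mul_le_of_le_one_right (norm_nonneg _) (Real.exp_le_one_iff.mpr ?_)
  have : (2 * π * I * n * z).re = -(2 * π * n * z.im) := by simp
  rw [this, neg_nonpos]
  positivity

lemma summable_norm_of_summable_norm_mul_rpow_neg {E : Type*} [SeminormedAddCommGroup E]
    {a : ℕ → E} {σ : ℝ} (hσ : σ ≤ 0) (h : Summable fun n : ℕ => ‖a n‖ * (n : ℝ) ^ (-σ)) :
    Summable fun n => ‖a n‖ := by
  refine .of_norm_bounded_eventually_nat h ?_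
  filter_upwards [eventually_ge_atTop 1] with n hn
  rw [norm_norm]
  exact le_mul_of_one_le_right (norm_nonneg _)
    (Real.one_le_rpow (by exact_mod_cast hn) (neg_nonneg.mpr hσ))

lemma SlashInvariantForm.levelOne_eq_zero_of_bounded {F : Type*} [FunLike F ℍ ℂ] {k : ℤ}
    [SlashInvariantFormClass F 𝒮ℒ k] (hk : 0 < k) (f : F) {B : ℝ} (hB : ∀ z, ‖f z‖ ≤ B) :
    ⇑f = 0 := by
  funext z
  by_contra hfz
  have hpos : 0 < ‖f z‖ := norm_pos_iff.mpr hfz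
  have hbound (n : ℕ) : ((n : ℝ) * z.im) ^ k * ‖f z‖ ≤ B := by
    obtain ⟨γ, hγ0, hγ1⟩ := (isCoprime_one_right (x := (n : ℤ))).exists_SL2_row 1
    have hγ := slash_action_eqn' f (MonoidHom.mem_range.mpr ⟨γ, rfl⟩) z
    simp only [Matrix.SpecialLinearGroup.mapGL_coe_matrix, Matrix.SpecialLinearGroup.map_apply_coe,
      RingHom.mapMatrix_apply, Matrix.map_apply, hγ0, hγ1] at hγ
    have him : (n : ℝ) * z.im ≤ ‖(n : ℂ) * z + 1‖ := by
      simpa [abs_of_pos z.im_pos] using abs_im_le_norm ((n : ℂ) * z + 1)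
    calc ((n : ℝ) * z.im) ^ k * ‖f z‖ ≤ ‖(n : ℂ) * z + 1‖ ^ k * ‖f z‖ := by
          gcongr
          exact zpow_le_zpow_left₀ hk.le (by positivity) him
      _ = ‖f _‖ := by rw [hγ, norm_mul, norm_zpow]; simp
      _ ≤ B := hB _
  have htop : Tendsto (fun n : ℕ => ((n : ℝ) * z.im) ^ k * ‖f z‖) atTop atTop :=
    ((tendsto_zpow_atTop_atTop hk).comp
      (tendsto_natCast_atTop_atTop.atTop_mul_const z.im_pos)).atTop_mul_const hpos
  obtain ⟨n, hn⟩ := (htop.eventually_gt_atTop B).exists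
  exact (hbound n).not_gt hn

namespace CuspForm

variable {k : ℤ}

lemma coeff_eq_qExpansion_coeff (f : CuspForm 𝒮ℒ k) {a : ℕ → ℂ}
    (hf : ∀ z : ℍ, HasSum (fun n : ℕ => a n * exp (2 * π * I * n * z)) (f z)) (n : ℕ) :
    a n = (qExpansion 1 f).coeff n := by
  refine ModularFormClass.qExpansion_coeff_unique one_pos one_mem_strictPeriods_SL
    (fun z ↦ ?_) n
  convert hf z using 2 with m
  rw [smul_eq_mul, Function.Periodic.qParam, ofReal_one, div_one, ← exp_nat_mul]
  ring_nf

lemma coeff_zero_eq_zero (f : CuspForm 𝒮ℒ k) {a : ℕ → ℂ}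
    (hf : ∀ z : ℍ, HasSum (fun n : ℕ => a n * exp (2 * π * I * n * z)) (f z)) :
    a 0 = 0 := by
  rw [coeff_eq_qExpansion_coeff f hf,
    CuspFormClass.qExpansion_coeff_zero f one_pos one_mem_strictPeriods_SL]

lemma levelOne_eq_zero_of_nonpos_weight (hk : k ≤ 0) (f : CuspForm 𝒮ℒ k) : ⇑f = 0 := by
  obtain rfl | hk := hk.eq_or_lt
  · obtain ⟨c, hc⟩ := ModularFormClass.levelOne_weight_zero_const f
    have hzero := CuspFormClass.zero_at_infty f
    rw [hc, IsZeroAtImInfty, ZeroAtFilter] at hzero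
    rw [hc, tendsto_nhds_unique tendsto_const_nhds hzero]
    rfl
  · exact ModularFormClass.levelOne_neg_weight_eq_zero hk f

lemma levelOne_eq_zero_of_summable_norm_coeff (f : CuspForm 𝒮ℒ k) {a : ℕ → ℂ}
    (hf : ∀ z : ℍ, HasSum (fun n : ℕ => a n * exp (2 * π * I * n * z)) (f z))
    (hsum : Summable fun n => ‖a n‖) : ⇑f = 0 := by
  rcases le_or_gt k 0 with hk | hk
  · exact levelOne_eq_zero_of_nonpos_weight hk f
  · exact SlashInvariantForm.levelOne_eq_zero_of_bounded hk f
      fun z ↦ norm_le_tsum_norm_coeff_of_hasSum z.im_pos.le (hf z) hsum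

lemma coeff_eq_zero_of_summable_norm (f : CuspForm 𝒮ℒ k) {a : ℕ → ℂ}
    (hf : ∀ z : ℍ, HasSum (fun n : ℕ => a n * exp (2 * π * I * n * z)) (f z))
    (hsum : Summable fun n => ‖a n‖) (n : ℕ) : a n = 0 := by
  rw [coeff_eq_qExpansion_coeff f hf, levelOne_eq_zero_of_summable_norm_coeff f hf hsum,
    qExpansion_zero, map_zero]

end CuspForm

lemma cuspFormOnImaginaryAxis_of_pos {k : ℤ} (f : CuspForm 𝒮ℒ k) {t : ℝ} (ht : 0 < t) :
    cuspFormOnImaginaryAxis k f t = f (ofComplex (I * t)) := by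
  rw [cuspFormOnImaginaryAxis, dif_pos ht, ofComplex_apply_of_im_pos]

lemma cuspFormOnImaginaryAxis_eq_zero {k : ℤ} {f : CuspForm 𝒮ℒ k} (hf : ⇑f = 0) :
    cuspFormOnImaginaryAxis k f = 0 := by
  funext t
  simp [cuspFormOnImaginaryAxis, hf]

lemma mellinConvergent_cuspFormOnImaginaryAxis {k : ℤ} (f : CuspForm 𝒮ℒ k) (s : ℂ) :
    MellinConvergent (cuspFormOnImaginaryAxis k f) s := by
  rcases le_or_gt k 0 with hk | hk
  · rw [cuspFormOnImaginaryAxis_eq_zero (CuspForm.levelOne_eq_zero_of_nonpos_weight hk f)]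
    simp [MellinConvergent]
  · refine ((CuspForm.isStrongFEPair hk f).hasMellin s).1.congr_fun (fun t ht ↦ ?_)
      measurableSet_Ioi
    rw [cuspFormOnImaginaryAxis_of_pos f ht]
    rfl

lemma hasSum_cuspFormOnImaginaryAxis {k : ℤ} (f : CuspForm 𝒮ℒ k) {a : ℕ → ℂ}
    (hf : ∀ z : ℍ, HasSum (fun n : ℕ => a n * exp (2 * π * I * n * z)) (f z))
    {t : ℝ} (ht : 0 < t) :
    HasSum (fun n : ℕ => a n * (Real.exp (-(2 * π * n) * t) : ℂ))
      (cuspFormOnImaginaryAxis k f t) := by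
  rw [cuspFormOnImaginaryAxis, dif_pos ht]
  convert hf ⟨I * t, by simpa using ht⟩ using 3 with n
  push_cast
  ring_nf
  simp

lemma hasSum_mellin_cuspFormOnImaginaryAxis {k : ℤ} (f : CuspForm 𝒮ℒ k) {a : ℕ → ℂ} {s : ℂ}
    (hf : ∀ z : ℍ, HasSum (fun n : ℕ => a n * exp (2 * π * I * n * z)) (f z))
    (hs : 0 < s.re) (hsum : Summable fun n : ℕ => ‖a n‖ * (n : ℝ) ^ (-s.re)) :
    HasSum (fun n : ℕ => (2 * π : ℂ) ^ (-s) * Gamma s * (a n * (n : ℂ) ^ (-s)))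
      (mellin (cuspFormOnImaginaryAxis k f) s) := by
  have ha0 := CuspForm.coeff_zero_eq_zero f hf
  have hp (n : ℕ) : a n = 0 ∨ 0 < 2 * π * n := by
    rcases n.eq_zero_or_pos with rfl | hn
    · exact .inl ha0
    · exact .inr (by positivity)
  have h2π : (0 : ℝ) ≤ 2 * π := by positivity
  have hsum' : Summable fun n : ℕ => ‖a n‖ / (2 * π * n) ^ s.re := by
    refine (hsum.mul_left ((2 * π) ^ (-s.re))).congr fun n ↦ ?_
    rcases n.eq_zero_or_pos with rfl | hn
    · simp [ha0]
    · rw [Real.mul_rpow h2π n.cast_nonneg, Real.rpow_neg h2π, Real.rpow_neg n.cast_nonneg]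
      field_simp
  convert hasSum_mellin hp hs (fun t ht ↦ hasSum_cuspFormOnImaginaryAxis f hf ht) hsum'
    using 2 with n
  rcases n.eq_zero_or_pos with rfl | hn
  · simp [ha0]
  · rw [ofReal_mul, mul_cpow_ofReal_nonneg h2π n.cast_nonneg, cpow_neg, cpow_neg]
    push_cast
    field_simp

theorem cuspForm_mellin_transform_general (k : ℤ) (f : CuspForm (MonoidHom.range (Matrix.SpecialLinearGroup.mapGL ℝ : Matrix.SpecialLinearGroup (Fin 2) ℤ →* Matrix.GeneralLinearGroup (Fin 2) ℝ)) k) (a : ℕ → ℂ) (s : ℂ)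
    (hf : ∀ z : UpperHalfPlane,
      HasSum (fun n : ℕ => a n * Complex.exp (2 * Real.pi * Complex.I * n * z)) (f z))
    (hs : Summable fun n : ℕ => ‖a n‖ * (n : ℝ) ^ (-s.re)) :
    IntegrableOn (fun t : ℝ => cuspFormOnImaginaryAxis k f t * (t : ℂ) ^ (s - 1))
        (Set.Ioi 0) ∧
      ∫ t in Set.Ioi (0 : ℝ), cuspFormOnImaginaryAxis k f t * (t : ℂ) ^ (s - 1) =
        (2 * Real.pi : ℂ) ^ (-s) * Complex.Gamma s * ∑' n : ℕ, a n * (n : ℂ) ^ (-s) := by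
  have hintegrand : (fun t : ℝ => cuspFormOnImaginaryAxis k f t * (t : ℂ) ^ (s - 1)) =
      fun t : ℝ => (t : ℂ) ^ (s - 1) • cuspFormOnImaginaryAxis k f t :=
    funext fun t ↦ by rw [smul_eq_mul, mul_comm]
  rw [hintegrand]
  refine ⟨mellinConvergent_cuspFormOnImaginaryAxis f s, ?_⟩
  change mellin _ s = _
  rcases lt_or_ge 0 s.re with hs0 | hs0
  · rw [← tsum_mul_left, (hasSum_mellin_cuspFormOnImaginaryAxis f hf hs0 hs).tsum_eq]
  · have hsum := summable_norm_of_summable_norm_mul_rpow_neg hs0 hs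
    rw [cuspFormOnImaginaryAxis_eq_zero
      (CuspForm.levelOne_eq_zero_of_summable_norm_coeff f hf hsum)]
    simp [mellin, CuspForm.coeff_eq_zero_of_summable_norm f hf hsum]

/-- Let `f` be a cusp form of weight `k` for `SL₂(ℤ)` with Fourier coefficients `(a_n)_{n≥1}`
(so `f(z) = ∑_{n≥1} a_n e^{2πinz}` and `a₀ = 0`), and let `s` be a complex number such that
`∑_{n≥1} |a_n| n^{-Re(s)}` converges. Then the Mellin integral `∫_0^∞ f(it) t^s dt/t`
converges and equals `(2π)^{-s} Γ(s) ∑_{n=1}^∞ a_n n^{-s}`. -/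
theorem cuspForm_mellin_transform (k : ℤ) (f : CuspForm (MonoidHom.range (Matrix.SpecialLinearGroup.mapGL ℝ : Matrix.SpecialLinearGroup (Fin 2) ℤ →* Matrix.GeneralLinearGroup (Fin 2) ℝ)) k) (a : ℕ → ℂ) (s : ℂ)
    (ha0 : a 0 = 0)
    (hf : ∀ z : UpperHalfPlane,
      HasSum (fun n : ℕ => a n * Complex.exp (2 * Real.pi * Complex.I * n * z)) (f z))
    (hs : Summable fun n : ℕ => ‖a n‖ * (n : ℝ) ^ (-s.re)) :
    IntegrableOn (fun t : ℝ => cuspFormOnImaginaryAxis k f t * (t : ℂ) ^ (s - 1))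
        (Set.Ioi 0) ∧
      ∫ t in Set.Ioi (0 : ℝ), cuspFormOnImaginaryAxis k f t * (t : ℂ) ^ (s - 1) =
        (2 * Real.pi : ℂ) ^ (-s) * Complex.Gamma s * ∑' n : ℕ, a n * (n : ℂ) ^ (-s) :=
  cuspForm_mellin_transform_general k f a s hf hs
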